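/- Let Z_r ∈ ℝ^{D×N_r}, Z_u ∈ ℝ^{D×N_u}, Z_a = [Z_r Z_u], w_init ∈ ℝᴰ, y_a = [y_r; y_u], ỹ_a = [y_r; ỹ_u]. Assume K_rr = Z_rᵀ Z_r is invertible and M := (K_uu − K_ur K_rr⁻¹ K_ru)⁻¹ exists. Define w_p, w_u, w_r by the closed forms w_p = w_init + Z_a (Z_aᵀ Z_a)⁻¹ (y_a − Z_aᵀ w_init), w_u = w_p + Z_a (Z_aᵀ Z_a)⁻¹ (ỹ_a − Z_aᵀ w_p), w_r = w_init + Z_r K_rr⁻¹ (y_r − Z_rᵀ w_init), and let Π_r = Z_r K_rr⁻¹ Z_rᵀ. Then w_r − w_u = (I_D − Π_r) Z_u M ( K_ur K_rr⁻¹ (y_r − Z_rᵀ w_init) + Z_uᵀ w_init − y_u + Z_uᵀ w_p − ỹ_u ). In particular, setting ỹ_u = Z_uᵀ (Π_r (w_p − w_init) + w_init) − y_u + Z_uᵀ w_p yields w_u = w_r. -/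

import Mathlib

/-!
Write `minNormInterp Z w y = w + Z (ZᵀZ)⁻¹ (y - Zᵀ w)` for the least-change interpolant of `y`
from `w`. Inverting the Gram matrix of `[Z_r Z_u]` through its Schur complement `M⁻¹` makes the
interpolant recursive: with `w' = minNormInterp Z_r w y_r` and `W = (I - Π_r) Z_u M`,
`minNormInterp [Z_r Z_u] w (y_r, y_u) = w' + W (y_u - Z_uᵀ w')`.
Hence `w_p = w_r + W (y_u - Z_uᵀ w_r)`, and since `w_p` already interpolates `y_r`,
`w_u = w_p + W (ỹ_u - Z_uᵀ w_p)`; subtracting gives the gap. For the relabelling rule,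
`Π_r (w_p - w_init) + w_init = minNormInterp Z_r w_init (Z_rᵀ w_p) = w_r`, so the bracket vanishes.
-/

open Matrix

namespace Matrix

theorem transpose_fromCols_mul_fromCols {k m n R : Type*} [Fintype k] [Semiring R]
    (A : Matrix k m R) (B : Matrix k n R) :
    (fromCols A B)ᵀ * fromCols A B = fromBlocks (Aᵀ * A) (Aᵀ * B) (Bᵀ * A) (Bᵀ * B) := by
  rw [transpose_fromCols, fromRows_mul_fromCols]

variable {m n R : Type*} [Fintype m] [DecidableEq m] [Fintype n] [DecidableEq n] [CommRing R]

theorem inv_fromBlocks_of_isUnit₁₁ {A : Matrix m m R} {B : Matrix m n R} {C : Matrix n m R}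
    {D : Matrix n n R} (hA : IsUnit A) (hS : IsUnit (D - C * A⁻¹ * B)) :
    (fromBlocks A B C D)⁻¹ =
      fromBlocks (A⁻¹ + A⁻¹ * B * (D - C * A⁻¹ * B)⁻¹ * C * A⁻¹)
        (-(A⁻¹ * B * (D - C * A⁻¹ * B)⁻¹)) (-((D - C * A⁻¹ * B)⁻¹ * C * A⁻¹))
        (D - C * A⁻¹ * B)⁻¹ := by
  let := hA.invertible
  let : Invertible (D - C * ⅟A * B) := by rw [invOf_eq_nonsing_inv]; exact hS.invertible
  let := fromBlocks₁₁Invertible A B C D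
  simpa only [invOf_eq_nonsing_inv] using invOf_fromBlocks₁₁_eq A B C D

theorem isUnit_fromBlocks_of_isUnit₁₁ {A : Matrix m m R} {B : Matrix m n R} {C : Matrix n m R}
    {D : Matrix n n R} (hA : IsUnit A) (hS : IsUnit (D - C * A⁻¹ * B)) :
    IsUnit (fromBlocks A B C D) := by
  let := hA.invertible
  rwa [isUnit_fromBlocks_iff_of_invertible₁₁, invOf_eq_nonsing_inv]

end Matrix

section MinNormInterp

variable {n k R : Type*} [Fintype n] [Fintype k] [DecidableEq k] [CommRing R]

noncomputable def minNormInterp (Z : Matrix n k R) (w : n → R) (y : k → R) : n → R :=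
  w + Z *ᵥ ((Zᵀ * Z)⁻¹ *ᵥ (y - Zᵀ *ᵥ w))

noncomputable def colSpaceProj (Z : Matrix n k R) : Matrix n n R :=
  Z * (Zᵀ * Z)⁻¹ * Zᵀ

theorem transpose_mulVec_minNormInterp {Z : Matrix n k R} (hZ : IsUnit (Zᵀ * Z)) (w : n → R)
    (y : k → R) : Zᵀ *ᵥ minNormInterp Z w y = y := by
  rw [minNormInterp, mulVec_add, mulVec_mulVec, mulVec_mulVec,
    mul_nonsing_inv _ ((isUnit_iff_isUnit_det _).mp hZ), one_mulVec, add_sub_cancel]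

theorem minNormInterp_of_transpose_mulVec_eq {Z : Matrix n k R} {w : n → R} {y : k → R}
    (h : Zᵀ *ᵥ w = y) : minNormInterp Z w y = w := by
  rw [minNormInterp, h, sub_self, mulVec_zero, mulVec_zero, add_zero]

theorem minNormInterp_transpose_mulVec (Z : Matrix n k R) (w v : n → R) :
    minNormInterp Z w (Zᵀ *ᵥ v) = w + colSpaceProj Z *ᵥ (v - w) := by
  rw [minNormInterp, colSpaceProj, ← mulVec_sub, mulVec_mulVec, mulVec_mulVec, Matrix.mul_assoc]

end MinNormInterp

section FromCols

variable {n r u R : Type*} [Fintype n] [Fintype r] [DecidableEq r] [Fintype u] [DecidableEq u]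
  [CommRing R] {Zr : Matrix n r R} {Zu : Matrix n u R}

noncomputable def gramSchur (Zr : Matrix n r R) (Zu : Matrix n u R) : Matrix u u R :=
  Zuᵀ * Zu - Zuᵀ * Zr * (Zrᵀ * Zr)⁻¹ * (Zrᵀ * Zu)

theorem isUnit_gram_fromCols (hrr : IsUnit (Zrᵀ * Zr)) (hS : IsUnit (gramSchur Zr Zu)) :
    IsUnit ((fromCols Zr Zu)ᵀ * fromCols Zr Zu) := by
  rw [transpose_fromCols_mul_fromCols]
  exact isUnit_fromBlocks_of_isUnit₁₁ hrr hS

theorem transpose_mulVec_minNormInterp_fromCols (hrr : IsUnit (Zrᵀ * Zr))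
    (hS : IsUnit (gramSchur Zr Zu)) (w : n → R) (yr : r → R) (yu : u → R) :
    Zrᵀ *ᵥ minNormInterp (fromCols Zr Zu) w (Sum.elim yr yu) = yr := by
  have h := congrArg (· ∘ Sum.inl)
    (transpose_mulVec_minNormInterp (isUnit_gram_fromCols hrr hS) w (Sum.elim yr yu))
  simpa only [transpose_fromCols, fromRows_mulVec, Sum.elim_comp_inl] using h

variable [DecidableEq n]

noncomputable def schurGain (Zr : Matrix n r R) (Zu : Matrix n u R) : Matrix n u R :=
  (1 - colSpaceProj Zr) * Zu * (gramSchur Zr Zu)⁻¹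

theorem fromCols_mul_inv_gram (hrr : IsUnit (Zrᵀ * Zr)) (hS : IsUnit (gramSchur Zr Zu)) :
    fromCols Zr Zu * ((fromCols Zr Zu)ᵀ * fromCols Zr Zu)⁻¹ =
      fromCols (Zr * (Zrᵀ * Zr)⁻¹ - schurGain Zr Zu * (Zuᵀ * Zr) * (Zrᵀ * Zr)⁻¹)
        (schurGain Zr Zu) := by
  rw [transpose_fromCols_mul_fromCols, inv_fromBlocks_of_isUnit₁₁ hrr hS, fromCols_mul_fromBlocks]
  simp only [schurGain, colSpaceProj, gramSchur]
  congr 1 <;>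
  · simp only [Matrix.mul_add, Matrix.sub_mul, Matrix.mul_neg, Matrix.one_mul, ← Matrix.mul_assoc]
    abel

theorem minNormInterp_fromCols (hrr : IsUnit (Zrᵀ * Zr)) (hS : IsUnit (gramSchur Zr Zu))
    (w : n → R) (yr : r → R) (yu : u → R) :
    minNormInterp (fromCols Zr Zu) w (Sum.elim yr yu) =
      minNormInterp Zr w yr + schurGain Zr Zu *ᵥ (yu - Zuᵀ *ᵥ minNormInterp Zr w yr) := by
  rw [minNormInterp, mulVec_mulVec, fromCols_mul_inv_gram hrr hS, transpose_fromCols,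
    fromRows_mulVec, ← Sum.elim_sub_sub, fromCols_mulVec_sumElim, minNormInterp]
  simp only [sub_mulVec, mulVec_add, mulVec_sub, ← mulVec_mulVec]
  abel

theorem sub_minNormInterp_relabel (hrr : IsUnit (Zrᵀ * Zr)) (hS : IsUnit (gramSchur Zr Zu))
    {w wp wu wr : n → R} {yr : r → R} {yu yu' : u → R}
    (hwp : wp = minNormInterp (fromCols Zr Zu) w (Sum.elim yr yu))
    (hwu : wu = minNormInterp (fromCols Zr Zu) wp (Sum.elim yr yu'))
    (hwr : wr = minNormInterp Zr w yr) :
    wr - wu = schurGain Zr Zu *ᵥ (Zuᵀ *ᵥ wr - yu + Zuᵀ *ᵥ wp - yu') := by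
  have hwp_interp : Zrᵀ *ᵥ wp = yr := hwp ▸ transpose_mulVec_minNormInterp_fromCols hrr hS w yr yu
  rw [minNormInterp_fromCols hrr hS, ← hwr] at hwp
  rw [hwu, minNormInterp_fromCols hrr hS, minNormInterp_of_transpose_mulVec_eq hwp_interp, hwp]
  simp only [mulVec_add, mulVec_sub]
  abel

end FromCols

/-- sum of the two identities of Lemma 3 without using the interpolation
relation `y_u = Z_uᵀ w_p`:
`w_r − w_u = (I − Π_r) Z_u M (K_ur K_rr⁻¹ (y_r − Z_rᵀ w_init) + Z_uᵀ w_init − y_u + Z_uᵀ w_p − ỹ_u)`,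
and in particular setting `ỹ_u = Z_uᵀ (Π_r (w_p − w_init) + w_init) − y_u + Z_uᵀ w_p`
yields `w_u = w_r`. -/
theorem gap_and_relabel_rule_NN {D Nr Nu : ℕ}
    (Zr : Matrix (Fin D) (Fin Nr) ℝ) (Zu : Matrix (Fin D) (Fin Nu) ℝ)
    (yr : Fin Nr → ℝ) (yu : Fin Nu → ℝ) (ytu : Fin Nu → ℝ) (winit : Fin D → ℝ)
    (Za : Matrix (Fin D) (Fin Nr ⊕ Fin Nu) ℝ) (hZa : Za = Matrix.fromCols Zr Zu)
    (ya : Fin Nr ⊕ Fin Nu → ℝ) (hya : ya = Sum.elim yr yu)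
    (yta : Fin Nr ⊕ Fin Nu → ℝ) (hyta : yta = Sum.elim yr ytu)
    (Krr : Matrix (Fin Nr) (Fin Nr) ℝ) (hKrr : Krr = Zrᵀ * Zr)
    (Kru : Matrix (Fin Nr) (Fin Nu) ℝ) (hKru : Kru = Zrᵀ * Zu)
    (Kur : Matrix (Fin Nu) (Fin Nr) ℝ) (hKur : Kur = Zuᵀ * Zr)
    (Kuu : Matrix (Fin Nu) (Fin Nu) ℝ) (hKuu : Kuu = Zuᵀ * Zu)
    (hrr : IsUnit Krr) (hS : IsUnit (Kuu - Kur * Krr⁻¹ * Kru))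
    (M : Matrix (Fin Nu) (Fin Nu) ℝ) (hM : M = (Kuu - Kur * Krr⁻¹ * Kru)⁻¹)
    (Pr : Matrix (Fin D) (Fin D) ℝ) (hPr : Pr = Zr * Krr⁻¹ * Zrᵀ)
    (wp : Fin D → ℝ)
    (hwp : wp = winit + Za *ᵥ ((Zaᵀ * Za)⁻¹ *ᵥ (ya - Zaᵀ *ᵥ winit)))
    (wu : Fin D → ℝ)
    (hwu : wu = wp + Za *ᵥ ((Zaᵀ * Za)⁻¹ *ᵥ (yta - Zaᵀ *ᵥ wp)))
    (wr : Fin D → ℝ)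
    (hwr : wr = winit + Zr *ᵥ (Krr⁻¹ *ᵥ (yr - Zrᵀ *ᵥ winit))) :
    wr - wu =
      ((1 - Pr) * Zu * M) *ᵥ
        (Kur *ᵥ (Krr⁻¹ *ᵥ (yr - Zrᵀ *ᵥ winit)) + Zuᵀ *ᵥ winit - yu
          + Zuᵀ *ᵥ wp - ytu) ∧
    (ytu = Zuᵀ *ᵥ (Pr *ᵥ (wp - winit) + winit) - yu + Zuᵀ *ᵥ wp → wu = wr) := by
  subst hZa hya hyta hKrr hKru hKur hKuu hM hPr
  have hgap : wr - wu = schurGain Zr Zu *ᵥ (Zuᵀ *ᵥ wr - yu + Zuᵀ *ᵥ wp - ytu) :=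
    sub_minNormInterp_relabel hrr hS hwp hwu hwr
  have hwp_interp : Zrᵀ *ᵥ wp = yr :=
    hwp ▸ transpose_mulVec_minNormInterp_fromCols hrr hS winit yr yu
  refine ⟨?_, fun hytu => ?_⟩
  · have hZuwr :
        Zuᵀ *ᵥ wr = (Zuᵀ * Zr) *ᵥ ((Zrᵀ * Zr)⁻¹ *ᵥ (yr - Zrᵀ *ᵥ winit)) + Zuᵀ *ᵥ winit := by
      rw [hwr, mulVec_add, mulVec_mulVec, add_comm]
    rw [← hZuwr]
    exact hgap
  · have hwr_proj : (Zr * (Zrᵀ * Zr)⁻¹ * Zrᵀ) *ᵥ (wp - winit) + winit = wr := by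
      rw [hwr, add_comm, ← hwp_interp]
      exact (minNormInterp_transpose_mulVec Zr winit wp).symm
    rw [hytu, hwr_proj, sub_self, mulVec_zero, sub_eq_zero] at hgap
    exact hgap.symm
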